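/- Let V be a grading-restricted vertex algebra, v ∈ V, and k, l ∈ ℤ with k, l ≥ 1. If [v]_{kl} ∈ O^∞(V), then [v]_{k−1,l−1} ∈ O^∞(V). In particular, since O^∞(V) ⊆ Q^∞(V), every element [v]_{kl} of O^∞(V) with k, l ≥ 1 satisfies the diagonal shift property. -/

import Mathlib

noncomputable section

open scoped BigOperators

/-- The generalized binomial coefficient `C(m, k)` for `m : ℤ`, as a complex number. -/
def cchoose (m : ℤ) (k : ℕ) : ℂ :=
  (∏ i ∈ Finset.range k, ((m : ℂ) - (i : ℂ))) / (k.factorial : ℂ)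

/-- A grading-restricted vertex algebra structure on a complex vector space `V`,
presented via the projections `proj n` onto the weight spaces `V_(n)` and the
modes `mode u n = u_n` of the vertex operator `Y(u,x) = ∑ u_n x^{-n-1}`. -/
structure GRVertexAlgebra (V : Type) [AddCommGroup V] [Module ℂ V] : Type where
  /-- projection onto the weight-`n` subspace `V_(n)` -/
  proj : ℤ → V →ₗ[ℂ] V
  /-- `mode u n v = u_n v` -/
  mode : V → ℤ → V → V
  /-- the vacuum vector `𝟙` -/
  one : V
  mode_add_left : ∀ (u u' : V) (n : ℤ) (v : V),
    mode (u + u') n v = mode u n v + mode u' n v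
  mode_smul_left : ∀ (c : ℂ) (u : V) (n : ℤ) (v : V),
    mode (c • u) n v = c • mode u n v
  mode_add_right : ∀ (u : V) (n : ℤ) (v v' : V),
    mode u n (v + v') = mode u n v + mode u n v'
  mode_smul_right : ∀ (u : V) (n : ℤ) (c : ℂ) (v : V),
    mode u n (c • v) = c • mode u n v
  proj_idem : ∀ (m n : ℤ) (v : V), proj m (proj n v) = if m = n then proj n v else 0
  proj_support_finite : ∀ v : V, (Function.support fun n : ℤ => proj n v).Finite
  proj_sum : ∀ v : V, (∑ᶠ n : ℤ, proj n v) = v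
  /-- each weight space is finite dimensional -/
  grading_finite_dim : ∀ n : ℤ, FiniteDimensional ℂ (LinearMap.range (proj n))
  /-- the grading is bounded below -/
  grading_bounded_below : ∃ N : ℤ, ∀ n : ℤ, n < N → proj n = 0
  /-- lower truncation: `u_n v = 0` for `n` sufficiently large -/
  lower_trunc : ∀ u v : V, ∃ N : ℤ, ∀ n : ℤ, N ≤ n → mode u n v = 0
  /-- the vacuum is homogeneous of weight `0` -/
  one_homogeneous : proj 0 one = one
  /-- identity property `Y(𝟙,x) = 1` -/
  identity_prop : ∀ (n : ℤ) (v : V), mode one n v = if n = -1 then v else 0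
  /-- creation property, regular part -/
  creation : ∀ (u : V) (n : ℤ), 0 ≤ n → mode u n one = 0
  /-- creation property, constant term: `lim_{x→0} Y(u,x)𝟙 = u` -/
  creation_limit : ∀ u : V, mode u (-1) one = u
  /-- the Jacobi identity, in terms of modes -/
  jacobi : ∀ (a b c : V) (l m n : ℤ),
      (∑ᶠ i : ℕ, cchoose m i • mode (mode a (l + i) b) (m + n - i) c)
    = (∑ᶠ i : ℕ, ((-1 : ℂ) ^ (i : ℕ) * cchoose l i) • mode a (m + l - i) (mode b (n + i) c))
      - (∑ᶠ i : ℕ, ((-1 : ℂ) ^ (l + i : ℤ) * cchoose l i) •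
          mode b (n + l - i) (mode a (m + i) c))
  /-- `L(0)`-bracket formula, where `L(0) v = ∑ n • proj n v` -/
  L0_bracket : ∀ (a v : V) (n : ℤ),
      (∑ᶠ m : ℤ, (m : ℂ) • proj m (mode a n v)) - mode a n (∑ᶠ m : ℤ, (m : ℂ) • proj m v)
    = mode (∑ᶠ m : ℤ, (m : ℂ) • proj m a) n v + (-(n : ℂ) - 1) • mode a n v
  /-- `L(-1)`-derivative formula, where `L(-1) u = u_{-2} 𝟙`:
  `Y(L(-1)u, x) = (d/dx) Y(u,x)` -/
  Lneg1_deriv : ∀ (u v : V) (n : ℤ),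
      mode (mode u (-2) one) n v = (-(n : ℂ)) • mode u (n - 1) v
  /-- `L(-1)`-bracket formula: `[L(-1), Y(u,x)] = Y(L(-1)u, x)` -/
  Lneg1_bracket : ∀ (u v : V) (n : ℤ),
      mode (mode u n v) (-2) one - mode u n (mode v (-2) one)
    = mode (mode u (-2) one) n v

namespace GRVertexAlgebra

variable {V : Type} [AddCommGroup V] [Module ℂ V]

/-- The operator `L(0)`. -/
def L0op (VA : GRVertexAlgebra V) (v : V) : V := ∑ᶠ m : ℤ, (m : ℂ) • VA.proj m v

/-- The operator `L(-1)`. -/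
def Lneg1op (VA : GRVertexAlgebra V) (v : V) : V := VA.mode v (-2) VA.one

/-- `u` is homogeneous (of some weight). -/
def Homogeneous (VA : GRVertexAlgebra V) (u : V) : Prop := ∃ w : ℤ, VA.proj w u = u

lemma mode_zero_left (VA : GRVertexAlgebra V) (n : ℤ) (v : V) : VA.mode 0 n v = 0 := by
  simpa using VA.mode_smul_left 0 0 n v

lemma mode_zero_right (VA : GRVertexAlgebra V) (u : V) (n : ℤ) : VA.mode u n 0 = 0 := by
  simpa using VA.mode_smul_right u n 0 0

/-- `Res_x x^N (1+x)^{l + L(0)-weight} Y(u, x) v`, i.e. the residue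
`Res_x x^N (1+x)^l Y((1+x)^{L(0)} u, x) v`, expressed in terms of modes and the
homogeneous components of `u`. -/
def resPow (VA : GRVertexAlgebra V) (N l : ℤ) (u v : V) : V :=
  ∑ᶠ m : ℤ, ∑ᶠ i : ℕ, cchoose (l + m) i • VA.mode (VA.proj m u) (N + i) v

end GRVertexAlgebra

section UInf

variable (V : Type) [AddCommGroup V] [Module ℂ V]

/-- The space of column-finite `ℕ × ℕ` matrices with entries in `V`, as a submodule of
the space of all doubly indexed families. -/
def UInfSub : Submodule ℂ (ℕ → ℕ → V) where
  carrier := {A | ∀ l : ℕ, (Function.support fun k => A k l).Finite}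
  add_mem' := by
    intro A B hA hB l
    refine Set.Finite.subset ((hA l).union (hB l)) ?_
    intro k hk
    by_contra h
    simp only [Set.mem_union, Function.mem_support, not_or, not_not] at h
    exact hk (by simp [Pi.add_apply, h.1, h.2])
  zero_mem' := by
    intro l
    simp [Function.support]
  smul_mem' := by
    intro c A hA l
    refine Set.Finite.subset (hA l) ?_
    intro k hk
    by_contra h
    simp only [Function.mem_support, not_not] at h
    exact hk (by simp [Pi.smul_apply, h])

/-- `U^∞(V)`: column-finite `ℕ × ℕ` matrices with entries in `V`. -/
def UInf : Type := ↥(UInfSub V)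

instance : AddCommGroup (UInf V) := by unfold UInf; infer_instance
instance : Module ℂ (UInf V) := by unfold UInf; infer_instance

end UInf

namespace GRVertexAlgebra

variable {V : Type} [AddCommGroup V] [Module ℂ V]

/-- `[v]_{kl} = v ⊗ E_{kl}`, the matrix with entry `v` in position `(k,l)` and `0` elsewhere. -/
def Usingle (v : V) (k l : ℕ) : UInf V :=
  ⟨fun k' l' => if k' = k ∧ l' = l then v else 0, by
    intro l'
    refine Set.Finite.subset (Set.finite_singleton k) ?_
    intro k' hk'
    simp only [Function.mem_support] at hk'
    by_contra h
    simp only [Set.mem_singleton_iff] at h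
    exact hk' (by simp [h])⟩

/-- The `(k,l)` entry of the product `[u]_{kn} ⋄ [v]_{nl}`:
`∑_{m=0}^{n} C(-k+n-l-1, m) Res_x x^{-k+n-l-m-1} (1+x)^l Y((1+x)^{L(0)} u, x) v`. -/
def diamondEntry (VA : GRVertexAlgebra V) (u v : V) (k n l : ℕ) : V :=
  ∑ m ∈ Finset.range (n + 1),
    cchoose (-(k : ℤ) + n - l - 1) m • VA.resPow (-(k : ℤ) + n - l - m - 1) l u v

lemma resPow_zero_left (VA : GRVertexAlgebra V) (N l : ℤ) (v : V) :
    VA.resPow N l 0 v = 0 := by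
  unfold GRVertexAlgebra.resPow
  have h : ∀ m : ℤ, (∑ᶠ i : ℕ, cchoose (l + m) i • VA.mode (VA.proj m (0 : V)) (N + i) v) = 0 := by
    intro m
    have : ∀ i : ℕ, cchoose (l + m) i • VA.mode (VA.proj m (0 : V)) (N + i) v = 0 := by
      intro i
      rw [map_zero, VA.mode_zero_left]
      simp
    simp only [this]
    exact finsum_zero
  simp only [h]
  exact finsum_zero

lemma resPow_zero_right (VA : GRVertexAlgebra V) (N l : ℤ) (u : V) :
    VA.resPow N l u 0 = 0 := by
  unfold GRVertexAlgebra.resPow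
  have h : ∀ m : ℤ, (∑ᶠ i : ℕ, cchoose (l + m) i • VA.mode (VA.proj m u) (N + i) (0 : V)) = 0 := by
    intro m
    have : ∀ i : ℕ, cchoose (l + m) i • VA.mode (VA.proj m u) (N + i) (0 : V) = 0 := by
      intro i
      rw [VA.mode_zero_right]
      simp
    simp only [this]
    exact finsum_zero
  simp only [h]
  exact finsum_zero

lemma diamondEntry_zero_left (VA : GRVertexAlgebra V) (v : V) (k n l : ℕ) :
    VA.diamondEntry 0 v k n l = 0 := by
  unfold GRVertexAlgebra.diamondEntry
  simp [VA.resPow_zero_left]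

lemma diamondEntry_zero_right (VA : GRVertexAlgebra V) (u : V) (k n l : ℕ) :
    VA.diamondEntry u 0 k n l = 0 := by
  unfold GRVertexAlgebra.diamondEntry
  simp [VA.resPow_zero_right]

/-- The product `⋄` on `U^∞(V)`. -/
def udiamond (VA : GRVertexAlgebra V) (A B : UInf V) : UInf V :=
  ⟨fun k l => ∑ᶠ n : ℕ, VA.diamondEntry (A.1 k n) (B.1 n l) k n l, by
    intro l
    refine Set.Finite.subset
      (Set.Finite.biUnion (B.2 l) (fun n _ => A.2 n)) ?_
    intro k hk
    simp only [Function.mem_support] at hk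
    by_contra h
    apply hk
    have hterm : ∀ n : ℕ, VA.diamondEntry (A.1 k n) (B.1 n l) k n l = 0 := by
      intro n
      by_cases hB : B.1 n l = 0
      · rw [hB]; exact VA.diamondEntry_zero_right _ _ _ _
      · have hA : A.1 k n = 0 := by
          by_contra hA
          exact h (Set.mem_biUnion (by exact hB) (by exact hA))
        rw [hA]; exact VA.diamondEntry_zero_left _ _ _ _
    simp only [hterm]
    exact finsum_zero⟩

end GRVertexAlgebra
/-- A lower-bounded generalized module for a grading-restricted vertex algebra,
presented via the mode action `wmode`, the projections `wproj μ` onto the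
(generalized-eigenvalue) weight spaces `W_(μ)`, and the operators `L_W(0)`, `L_W(-1)`. -/
structure LBGModule {V : Type} [AddCommGroup V] [Module ℂ V]
    (VA : GRVertexAlgebra V) (W : Type) [AddCommGroup W] [Module ℂ W] : Type where
  /-- `wmode u n w = u_n w`, the modes of `Y_W(u,x) = ∑ u_n x^{-n-1}` -/
  wmode : V → ℤ → W → W
  /-- projection onto the weight-`μ` subspace `W_(μ)` -/
  wproj : ℂ → W →ₗ[ℂ] W
  /-- the operator `L_W(0)` -/
  LW0 : W →ₗ[ℂ] W
  /-- the operator `L_W(-1)` -/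
  LW1 : W →ₗ[ℂ] W
  wmode_add_left : ∀ (u u' : V) (n : ℤ) (w : W),
    wmode (u + u') n w = wmode u n w + wmode u' n w
  wmode_smul_left : ∀ (c : ℂ) (u : V) (n : ℤ) (w : W),
    wmode (c • u) n w = c • wmode u n w
  wmode_add_right : ∀ (u : V) (n : ℤ) (w w' : W),
    wmode u n (w + w') = wmode u n w + wmode u n w'
  wmode_smul_right : ∀ (u : V) (n : ℤ) (c : ℂ) (w : W),
    wmode u n (c • w) = c • wmode u n w
  wproj_idem : ∀ (μ ν : ℂ) (w : W), wproj μ (wproj ν w) = if μ = ν then wproj ν w else 0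
  wproj_support_finite : ∀ w : W, (Function.support fun μ : ℂ => wproj μ w).Finite
  wproj_sum : ∀ w : W, (∑ᶠ μ : ℂ, wproj μ w) = w
  /-- the grading is bounded below in real part -/
  grading_bounded_below : ∃ B : ℝ, ∀ μ : ℂ, μ.re < B → wproj μ = 0
  /-- lower truncation -/
  lower_trunc : ∀ (u : V) (w : W), ∃ N : ℤ, ∀ n : ℤ, N ≤ n → wmode u n w = 0
  /-- identity property `Y_W(𝟙,x) = 1` -/
  identity_prop : ∀ (n : ℤ) (w : W), wmode VA.one n w = if n = -1 then w else 0
  /-- the Jacobi identity for the module -/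
  jacobi : ∀ (a b : V) (w : W) (l m n : ℤ),
      (∑ᶠ i : ℕ, cchoose m i • wmode (VA.mode a (l + i) b) (m + n - i) w)
    = (∑ᶠ i : ℕ, ((-1 : ℂ) ^ (i : ℕ) * cchoose l i) • wmode a (m + l - i) (wmode b (n + i) w))
      - (∑ᶠ i : ℕ, ((-1 : ℂ) ^ (l + i : ℤ) * cchoose l i) •
          wmode b (n + l - i) (wmode a (m + i) w))
  /-- `W_(μ)` is the generalized eigenspace of `L_W(0)` with eigenvalue `μ` -/
  gen_eigenspace : ∀ (μ : ℂ) (w : W),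
    ∃ k : ℕ, (((LW0 - μ • LinearMap.id : Module.End ℂ W) ^ k) : W →ₗ[ℂ] W) (wproj μ w) = 0
  gen_eigenspace_mem : ∀ (μ : ℂ) (w : W),
    (∃ k : ℕ, (((LW0 - μ • LinearMap.id : Module.End ℂ W) ^ k) : W →ₗ[ℂ] W) w = 0) → wproj μ w = w
  /-- `L_W(0)`-bracket formula -/
  LW0_bracket : ∀ (a : V) (w : W) (n : ℤ),
      LW0 (wmode a n w) - wmode a n (LW0 w)
    = wmode (∑ᶠ m : ℤ, (m : ℂ) • VA.proj m a) n w + (-(n : ℂ) - 1) • wmode a n w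
  /-- `L_W(-1)`-derivative formula: `Y_W(L(-1)u, x) = (d/dx) Y_W(u,x)` -/
  LW1_deriv : ∀ (u : V) (w : W) (n : ℤ),
      wmode (VA.mode u (-2) VA.one) n w = (-(n : ℂ)) • wmode u (n - 1) w
  /-- `L_W(-1)`-bracket formula -/
  LW1_bracket : ∀ (u : V) (w : W) (n : ℤ),
      LW1 (wmode u n w) - wmode u n (LW1 w) = wmode (VA.mode u (-2) VA.one) n w

namespace LBGModule

variable {V : Type} [AddCommGroup V] [Module ℂ V] {VA : GRVertexAlgebra V}
variable {W : Type} [AddCommGroup W] [Module ℂ W]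

lemma wmode_zero_left (M : LBGModule VA W) (n : ℤ) (w : W) : M.wmode 0 n w = 0 := by
  simpa using M.wmode_smul_left 0 0 n w

lemma wmode_zero_right (M : LBGModule VA W) (u : V) (n : ℤ) : M.wmode u n 0 = 0 := by
  simpa using M.wmode_smul_right u n 0 0

/-- `Ω_n(W) = {w ∈ W : v_k w = 0 for homogeneous v with wt v - k - 1 < -n}`
(for `n < 0` this is automatically `{0}`, matching `Ω_{-1}(W) = 0`). -/
def OmegaSet (M : LBGModule VA W) (n : ℤ) : Set W :=
  {w : W | ∀ (m k : ℤ) (v : V), m - k - 1 < -n → M.wmode (VA.proj m v) k w = 0}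

/-- `ϑ_{Gr(W)}([v]_{kl})` applied to a representative `w`:
`Res_x x^{l-k-1} Y_W(x^{L(0)} v, x) w`. -/
def wAct (M : LBGModule VA W) (v : V) (k l : ℕ) (w : W) : W :=
  ∑ᶠ m : ℤ, M.wmode (VA.proj m v) ((l : ℤ) - (k : ℤ) - 1 + m) w

end LBGModule

namespace GRVertexAlgebra

variable {V : Type} [AddCommGroup V] [Module ℂ V]

/-- Membership in `Q^∞(V)`: `A` acts as zero on `Gr(W)` for every lower-bounded
generalized `V`-module `W`.  Here the action of `A` on `[w]_n ∈ Gr_n(W)` has component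
`[ϑ([A_{kn}]_{kn}) w]_k` in `Gr_k(W)`, which vanishes in `Gr_k(W) = Ω_k(W)/Ω_{k-1}(W)`
exactly when the representative lies in `Ω_{k-1}(W)`. -/
def memQ (VA : GRVertexAlgebra V) (A : UInf V) : Prop :=
  ∀ (W : Type) (_ : AddCommGroup W) (_ : Module ℂ W) (M : LBGModule VA W)
    (n k : ℕ) (w : W), w ∈ M.OmegaSet n →
      M.wAct (A.1 k n) k n w ∈ M.OmegaSet ((k : ℤ) - 1)

/-- The generators of `O^∞_∘(V)` living in position `(k,l)`:
`Res_x x^{-k-l-p-2} (1+x)^l Y((1+x)^{L(0)} u, x) v`. -/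
def circExpr (VA : GRVertexAlgebra V) (u v : V) (k l p : ℕ) : V :=
  VA.resPow (-(k : ℤ) - l - p - 2) l u v

/-- Membership in `O^∞_∘(V)`: each entry of `A` is a (finite) linear combination of the
generators `Res_x x^{-k-l-p-2} (1+x)^l [Y((1+x)^{L(0)} u, x) v]_{kl}`; since each generator
is concentrated in a single position `(k,l)`, an infinite linear combination in which each
pair `(k,l)` appears only finitely many times is exactly a column-finite matrix each of whose
entries lies in the corresponding span. -/
def memOcirc (VA : GRVertexAlgebra V) (A : UInf V) : Prop :=
  ∀ k l : ℕ, A.1 k l ∈ Submodule.span ℂ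
    {x : V | ∃ (u v : V) (p : ℕ), x = VA.circExpr u v k l p}

/-- The element `(L(-1) + L(0) + l - k) v`. -/
def LLExpr (VA : GRVertexAlgebra V) (k l : ℕ) (v : V) : V :=
  VA.Lneg1op v + VA.L0op v + (((l : ℂ) - (k : ℂ)) • v)

/-- Membership in `O^∞(V)`. -/
def memO (VA : GRVertexAlgebra V) (A : UInf V) : Prop :=
  ∀ k l : ℕ, A.1 k l ∈ Submodule.span ℂ
    ({x : V | ∃ (u v : V) (p : ℕ), x = VA.circExpr u v k l p}
      ∪ {x : V | ∃ v : V, x = VA.LLExpr k l v})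

end GRVertexAlgebra
namespace GRVertexAlgebra

variable {V : Type} [AddCommGroup V] [Module ℂ V]

/-- Huang's Jacobi-identity element of `U^∞(V)` attached to `u, v ∈ V` with `v`
homogeneous of weight `wtv`, and integers `k ∈ ℕ`, `l, p, n ∈ ℤ` with `l + p ∈ ℕ`:
`∑_{j, n+p-j ≥ 0} (-1)^j C(p,j) [v]_{k,n+p-j} ⋄ [u]_{n+p-j,l+p}`
`- ∑_{j, l-n+k+p-j ≥ 0} (-1)^{p-j} C(p,j) [u]_{k,l-n+k+p-j} ⋄ [v]_{l-n+k+p-j,l+p}`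
`- ∑_{j ∈ ℕ} C(wt v + n - k - 1, j) [v_{p+j} u]_{k,l+p}`. -/
def jElt (VA : GRVertexAlgebra V) (u v : V) (wtv : ℤ) (k : ℕ) (l p n : ℤ) : UInf V :=
  (∑ᶠ j : ℕ, if (j : ℤ) ≤ n + p then
      ((-1 : ℂ) ^ (j : ℕ) * cchoose p j) •
        VA.udiamond (Usingle v k (n + p - j).toNat)
          (Usingle u (n + p - j).toNat (l + p).toNat)
    else 0)
  - (∑ᶠ j : ℕ, if (j : ℤ) ≤ l - n + (k : ℤ) + p then
      ((-1 : ℂ) ^ ((p : ℤ) - (j : ℤ)) * cchoose p j) •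
        VA.udiamond (Usingle u k (l - n + (k : ℤ) + p - j).toNat)
          (Usingle v (l - n + (k : ℤ) + p - j).toNat (l + p).toNat)
    else 0)
  - Usingle (∑ᶠ j : ℕ, cchoose (wtv + n - (k : ℤ) - 1) j • VA.mode v (p + j) u)
      k (l + p).toNat

/-- The `(k, l+p)` entry of the Jacobi-identity element `jElt`, written out in terms of
residues as in the paper. -/
def jEntry (VA : GRVertexAlgebra V) (u v : V) (wtv : ℤ) (k : ℕ) (l p n : ℤ) : V :=
  (∑ᶠ j : ℕ, if (j : ℤ) ≤ n + p then
      ((-1 : ℂ) ^ (j : ℕ) * cchoose p j) •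
        VA.diamondEntry v u k (n + p - j).toNat (l + p).toNat
    else 0)
  - (∑ᶠ j : ℕ, if (j : ℤ) ≤ l - n + (k : ℤ) + p then
      ((-1 : ℂ) ^ ((p : ℤ) - (j : ℤ)) * cchoose p j) •
        VA.diamondEntry u v k (l - n + (k : ℤ) + p - j).toNat (l + p).toNat
    else 0)
  - (∑ᶠ j : ℕ, cchoose (wtv + n - (k : ℤ) - 1) j • VA.mode v (p + j) u)

/-- The set of generating elements of `J^∞(V)`. -/
def JSet (VA : GRVertexAlgebra V) : Set (UInf V) :=
  {A : UInf V | ∃ (u v : V) (wtv : ℤ) (k : ℕ) (l p n : ℤ),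
    VA.proj wtv v = v ∧ 0 ≤ l + p ∧ A = VA.jElt u v wtv k l p n}

/-- The set `O^∞(V)` of Huang, as a subset of `U^∞(V)`. -/
def OSet (VA : GRVertexAlgebra V) : Set (UInf V) := {A : UInf V | VA.memO A}

end GRVertexAlgebra

/-- A vertex operator algebra: a grading-restricted vertex algebra together with a
conformal vector `ω` whose modes `L(n) = ω_{n+1}` give a representation of the Virasoro
algebra, recover the grading operator `L(0)`, and satisfy the `L(-1)`-property. -/
structure VertexOperatorAlgebra (V : Type) [AddCommGroup V] [Module ℂ V]
    extends GRVertexAlgebra V : Type where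
  /-- the conformal vector -/
  omega : V
  /-- the central charge -/
  centralCharge : ℂ
  /-- the Virasoro relations for `L(n) = ω_{n+1}` -/
  virasoro : ∀ (m n : ℤ) (v : V),
      mode omega (m + 1) (mode omega (n + 1) v) - mode omega (n + 1) (mode omega (m + 1) v)
    = ((m : ℂ) - (n : ℂ)) • mode omega (m + n + 1) v
      + (if m + n = 0 then (((m ^ 3 - m : ℤ) : ℂ) / 12) * centralCharge else 0) • v
  /-- `L(0) = ω_1` is the grading operator -/
  omega_L0 : ∀ v : V, mode omega 1 v = ∑ᶠ m : ℤ, (m : ℂ) • proj m v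
  /-- `L(-1) = ω_0` -/
  omega_Lneg1 : ∀ v : V, mode omega 0 v = mode v (-2) one

namespace GRVertexAlgebra

variable {V : Type} [AddCommGroup V] [Module ℂ V]

/-- The circle product `u ∘_n v = Res_x (1+x)^{wt u + n} Y(u,x) v / x^{2n+2}`
(for `u` homogeneous; `resPow` inserts the weight of each homogeneous component). -/
def circN (VA : GRVertexAlgebra V) (n : ℕ) (u v : V) : V :=
  VA.resPow (-(2 * (n : ℤ)) - 2) n u v

/-- The subspace `O_n(V)`, spanned by the `u ∘_n v` for homogeneous `u` and all `v`, and
by the `(L(-1) + L(0)) v`. -/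
def ZhuO (VA : GRVertexAlgebra V) (n : ℕ) : Submodule ℂ V :=
  Submodule.span ℂ
    ({x : V | ∃ u v : V, VA.Homogeneous u ∧ x = VA.circN n u v}
      ∪ {x : V | ∃ v : V, x = VA.Lneg1op v + VA.L0op v})

/-- The product `u *_n v` of Dong–Li–Mason (for `u` homogeneous, extended linearly):
`∑_{m=0}^{n} (-1)^m C(m+n, n) Res_x (1+x)^{wt u + n} Y(u,x) v / x^{n+m+1}`. -/
def starN (VA : GRVertexAlgebra V) (n : ℕ) (u v : V) : V :=
  ∑ m ∈ Finset.range (n + 1),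
    ((-1 : ℂ) ^ (m : ℕ) * ((m + n).choose n : ℂ)) •
      VA.resPow (-(n : ℤ) - m - 1) n u v

end GRVertexAlgebra

/-- The monomial `α(-i_1) ⋯ α(-i_j) 𝟙` of the rank one Heisenberg vertex operator algebra,
indexed by the multiset `{i_1, …, i_j}` of positive integers; here `a = α(-1)𝟙` so that
`α(m) = a_m`. -/
def heisMono {V : Type} [AddCommGroup V] [Module ℂ V]
    (VA : GRVertexAlgebra V) (a : V) (μ : Multiset ℕ+) : V :=
  (μ.sort (· ≤ ·)).foldr (fun i v => VA.mode a (-(i : ℤ)) v) VA.one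

/-- The rank one Heisenberg vertex operator algebra `M(1)`: a vertex operator algebra
with a weight-one element `a = α(-1)𝟙` whose modes `α(m) = a_m` satisfy the rank one
Heisenberg relations (with the central element acting as `1`), such that the monomials
`α(-i_1) ⋯ α(-i_j) 𝟙` form a basis, and with conformal vector `ω = (1/2) α(-1)² 𝟙`
of central charge `1`. -/
structure HeisenbergVOA (V : Type) [AddCommGroup V] [Module ℂ V]
    extends VertexOperatorAlgebra V : Type where
  /-- the element `a = α(-1)𝟙` -/
  a : V
  /-- `α(-1)𝟙` is homogeneous of weight one -/
  a_wt : proj 1 a = a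
  /-- the Heisenberg commutation relations `[α(m), α(n)] = m δ_{m+n,0}` (`c` acts as `1`) -/
  heis_comm : ∀ (m n : ℤ) (v : V),
      mode a m (mode a n v) - mode a n (mode a m v)
    = if m + n = 0 then (m : ℂ) • v else 0
  /-- `M(1) ≃ S(ĥ⁻)` linearly: the monomials `α(-i_1)⋯α(-i_j)𝟙` form a basis -/
  basis : Module.Basis (Multiset ℕ+) ℂ V
  basis_eq : ∀ μ : Multiset ℕ+, basis μ = heisMono toGRVertexAlgebra a μ
  omega_eq : omega = (1 / 2 : ℂ) • mode a (-1) a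
  centralCharge_eq : centralCharge = 1

namespace HeisenbergVOA

variable {V : Type} [AddCommGroup V] [Module ℂ V]

/-- The element
`D_n = [α(-1)𝟙]_{nn} ⋄ [α(-1)𝟙]_{nn} - [α(-1)²𝟙]_{nn} + 2n [𝟙]_{nn}` of `U^∞(M(1))`. -/
def Delt (H : HeisenbergVOA V) (n : ℕ) : UInf V :=
  H.udiamond (GRVertexAlgebra.Usingle H.a n n) (GRVertexAlgebra.Usingle H.a n n)
    - GRVertexAlgebra.Usingle (H.mode H.a (-1) H.a) n n
    + (2 * (n : ℂ)) • GRVertexAlgebra.Usingle H.one n n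

end HeisenbergVOA

namespace LBGModule

variable {V : Type} [AddCommGroup V] [Module ℂ V]
variable {W : Type} [AddCommGroup W] [Module ℂ W]

/-- `Ω(W) = {w ∈ W : α(n) w = 0 for all n > 0}` for a module `W` over the rank one
Heisenberg vertex operator algebra. -/
def smallOmega (H : HeisenbergVOA V) (M : LBGModule H.toGRVertexAlgebra W) :
    Submodule ℂ W where
  carrier := {w : W | ∀ n : ℤ, 0 < n → M.wmode H.a n w = 0}
  add_mem' := by
    intro w w' hw hw' n hn
    rw [M.wmode_add_right, hw n hn, hw' n hn, add_zero]
  zero_mem' := fun n _ => M.wmode_zero_right H.a n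
  smul_mem' := by
    intro c w hw n hn
    rw [M.wmode_smul_right, hw n hn, smul_zero]

end LBGModule
/-! ### Auxiliary lemmas for the diagonal shift property -/

section CchooseAux

lemma cchoose_zero' (m : ℤ) : cchoose m 0 = 1 := by simp [cchoose]

lemma cchoose_succ_succ (m : ℤ) (i : ℕ) :
    cchoose (m + 1) (i + 1) = cchoose m (i + 1) + cchoose m i := by
  have hfi : ((i.factorial : ℂ)) ≠ 0 := Nat.cast_ne_zero.mpr (Nat.factorial_ne_zero _)
  have hfi1 : (((i + 1).factorial : ℂ)) ≠ 0 := Nat.cast_ne_zero.mpr (Nat.factorial_ne_zero _)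
  have hi1 : ((i : ℂ) + 1) ≠ 0 := by
    have := Nat.cast_pos (α := ℝ) |>.mpr (Nat.succ_pos i)
    intro hcon
    have : ((i : ℂ) + 1) = ((i + 1 : ℕ) : ℂ) := by push_cast; ring
    simp only [this] at hcon
    exact Nat.cast_ne_zero.mpr (Nat.succ_ne_zero i) hcon
  have h1 : (∏ j ∈ Finset.range (i + 1), (((m + 1 : ℤ) : ℂ) - (j : ℂ)))
      = (∏ j ∈ Finset.range i, ((m : ℂ) - (j : ℂ))) * ((m : ℂ) + 1) := by
    rw [Finset.prod_range_succ']
    congr 1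
    · apply Finset.prod_congr rfl
      intro j _
      push_cast
      ring
    · push_cast
      ring
  have h2 : (∏ j ∈ Finset.range (i + 1), ((m : ℂ) - (j : ℂ)))
      = (∏ j ∈ Finset.range i, ((m : ℂ) - (j : ℂ))) * ((m : ℂ) - (i : ℂ)) :=
    Finset.prod_range_succ _ _
  have h3 : (((i + 1).factorial : ℂ)) = ((i : ℂ) + 1) * (i.factorial : ℂ) := by
    rw [Nat.factorial_succ]
    push_cast
    ring
  unfold cchoose
  rw [h1, h2, h3]
  field_simp
  ring

end CchooseAux

section FinsumAux

lemma finsum_nat_eq_range {M : Type*} [AddCommMonoid M] (f : ℕ → M) (B : ℕ)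
    (h : ∀ i, B ≤ i → f i = 0) : ∑ᶠ i, f i = ∑ i ∈ Finset.range B, f i := by
  apply finsum_eq_sum_of_support_subset
  intro i hi
  simp only [Function.mem_support] at hi
  simp only [Finset.coe_range, Set.mem_Iio]
  by_contra hc
  exact hi (h i (le_of_not_gt hc))

end FinsumAux

namespace GRVertexAlgebra

variable {V : Type} [AddCommGroup V] [Module ℂ V] (VA : GRVertexAlgebra V)

lemma proj_proj_ne {m n : ℤ} (h : m ≠ n) (v : V) : VA.proj m (VA.proj n v) = 0 := by
  rw [VA.proj_idem]
  simp [h]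

lemma support_wsmul_fin (x : V) :
    (Function.support fun m : ℤ => (m : ℂ) • VA.proj m x).Finite :=
  (VA.proj_support_finite x).subset (by
    intro m hm
    simp only [Function.mem_support] at hm ⊢
    intro h0
    exact hm (by rw [h0, smul_zero]))

lemma eigen_proj (x : V) (c : ℤ)
    (hx : (∑ᶠ m : ℤ, (m : ℂ) • VA.proj m x) = (c : ℂ) • x) : VA.proj c x = x := by
  have hzero : ∀ m' : ℤ, m' ≠ c → VA.proj m' x = 0 := by
    intro m' hm'
    have h1 := (VA.proj m').toAddMonoidHom.map_finsum (VA.support_wsmul_fin x)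
    simp only [LinearMap.toAddMonoidHom_coe] at h1
    rw [hx] at h1
    have h2 : (∑ᶠ m : ℤ, VA.proj m' ((m : ℂ) • VA.proj m x)) = (m' : ℂ) • VA.proj m' x := by
      rw [finsum_eq_single _ m']
      · rw [map_smul, VA.proj_idem]
        simp
      · intro m hm
        rw [map_smul, VA.proj_proj_ne (Ne.symm hm), smul_zero]
    rw [h2, map_smul] at h1
    have h3 : ((m' : ℂ) - (c : ℂ)) • VA.proj m' x = 0 := by
      rw [sub_smul, h1, sub_self]
    rcases smul_eq_zero.mp h3 with h4 | h4
    · exact absurd (by exact_mod_cast sub_eq_zero.mp h4 : m' = c) hm'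
    · exact h4
  have hsum := VA.proj_sum x
  rw [finsum_eq_single _ c hzero] at hsum
  exact hsum

lemma L0_eq (v : V) {q : ℤ} (hv : VA.proj q v = v) :
    (∑ᶠ m : ℤ, (m : ℂ) • VA.proj m v) = (q : ℂ) • v := by
  rw [finsum_eq_single _ q]
  · rw [hv]
  · intro m hm
    rw [← hv, VA.proj_proj_ne hm, smul_zero]

lemma mode_homog {u v : V} {h q : ℤ} (hu : VA.proj h u = u) (hv : VA.proj q v = v) (t : ℤ) :
    VA.proj (h + q - t - 1) (VA.mode u t v) = VA.mode u t v := by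
  apply VA.eigen_proj
  have hb := VA.L0_bracket u v t
  rw [VA.L0_eq v hv, VA.L0_eq u hu, VA.mode_smul_right, VA.mode_smul_left] at hb
  have h2 := sub_eq_iff_eq_add.mp hb
  rw [h2]
  push_cast
  module

lemma mode_bound (u v : V) (N : ℤ) : ∃ B : ℕ, ∀ i : ℕ, B ≤ i → VA.mode u (N + i) v = 0 := by
  obtain ⟨N₁, hN₁⟩ := VA.lower_trunc u v
  refine ⟨(N₁ - N).toNat, fun i hi => hN₁ _ ?_⟩
  have h1 : (N₁ - N : ℤ) ≤ ((N₁ - N).toNat : ℤ) := Int.self_le_toNat _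
  have h2 : (((N₁ - N).toNat : ℕ) : ℤ) ≤ (i : ℤ) := by exact_mod_cast hi
  omega

lemma resPow_inner_zero {u : V} {m : ℤ} (hm : VA.proj m u = 0) (L N : ℤ) (v : V) :
    (∑ᶠ i : ℕ, cchoose (L + m) i • VA.mode (VA.proj m u) (N + i) v) = 0 := by
  have h : ∀ i : ℕ, cchoose (L + m) i • VA.mode (VA.proj m u) (N + i) v = 0 := by
    intro i
    rw [hm, VA.mode_zero_left, smul_zero]
  rw [finsum_congr h, finsum_zero]

lemma resPow_homog_left {u : V} {h : ℤ} (hu : VA.proj h u = u) (N L : ℤ) (v : V) :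
    VA.resPow N L u v = ∑ᶠ i : ℕ, cchoose (L + h) i • VA.mode u (N + i) v := by
  unfold GRVertexAlgebra.resPow
  rw [finsum_eq_single _ h]
  · rw [hu]
  · intro m hm
    exact VA.resPow_inner_zero (by rw [← hu, VA.proj_proj_ne hm]) L N v

lemma support_mode_smul_fin (u v : V) (N : ℤ) (c : ℕ → ℂ) :
    (Function.support fun i : ℕ => c i • VA.mode u (N + i) v).Finite := by
  obtain ⟨B, hB⟩ := VA.mode_bound u v N
  apply Set.Finite.subset (Set.finite_Iio B)
  intro i hi
  simp only [Function.mem_support] at hi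
  simp only [Set.mem_Iio]
  by_contra hc
  exact hi (by rw [hB i (le_of_not_gt hc), smul_zero])

lemma resPow_outer_support (N L : ℤ) (u v : V) :
    (Function.support fun m : ℤ =>
      ∑ᶠ i : ℕ, cchoose (L + m) i • VA.mode (VA.proj m u) (N + i) v).Finite :=
  (VA.proj_support_finite u).subset (by
    intro m hm
    simp only [Function.mem_support] at hm ⊢
    intro h0
    exact hm (VA.resPow_inner_zero h0 L N v))

lemma resPow_add_right (N L : ℤ) (u v v' : V) :
    VA.resPow N L u (v + v') = VA.resPow N L u v + VA.resPow N L u v' := by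
  unfold GRVertexAlgebra.resPow
  rw [← finsum_add_distrib (VA.resPow_outer_support N L u v) (VA.resPow_outer_support N L u v')]
  apply finsum_congr
  intro m
  rw [← finsum_add_distrib (VA.support_mode_smul_fin (VA.proj m u) v N _)
        (VA.support_mode_smul_fin (VA.proj m u) v' N _)]
  apply finsum_congr
  intro i
  rw [VA.mode_add_right, smul_add]

lemma resPow_add_left (N L : ℤ) (u u' v : V) :
    VA.resPow N L (u + u') v = VA.resPow N L u v + VA.resPow N L u' v := by
  unfold GRVertexAlgebra.resPow
  rw [← finsum_add_distrib (VA.resPow_outer_support N L u v) (VA.resPow_outer_support N L u' v)]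
  apply finsum_congr
  intro m
  rw [← finsum_add_distrib (VA.support_mode_smul_fin (VA.proj m u) v N _)
        (VA.support_mode_smul_fin (VA.proj m u') v N _)]
  apply finsum_congr
  intro i
  rw [map_add, VA.mode_add_left, smul_add]

lemma resPow_sum_left {ι : Type*} (s : Finset ι) (f : ι → V) (N L : ℤ) (v : V) :
    VA.resPow N L (∑ i ∈ s, f i) v = ∑ i ∈ s, VA.resPow N L (f i) v := by
  classical
  induction s using Finset.induction_on with
  | empty => simp [VA.resPow_zero_left]
  | insert _ _ hx ih =>
      rw [Finset.sum_insert hx, Finset.sum_insert hx, VA.resPow_add_left, ih]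

lemma resPow_sum_right {ι : Type*} (s : Finset ι) (f : ι → V) (N L : ℤ) (u : V) :
    VA.resPow N L u (∑ i ∈ s, f i) = ∑ i ∈ s, VA.resPow N L u (f i) := by
  classical
  induction s using Finset.induction_on with
  | empty => simp [VA.resPow_zero_right]
  | insert _ _ hx ih =>
      rw [Finset.sum_insert hx, Finset.sum_insert hx, VA.resPow_add_right, ih]

lemma resPow_succ (N L : ℤ) (u v : V) :
    VA.resPow N (L + 1) u v = VA.resPow N L u v + VA.resPow (N + 1) L u v := by
  unfold GRVertexAlgebra.resPow
  rw [← finsum_add_distrib (VA.resPow_outer_support N L u v)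
        (VA.resPow_outer_support (N + 1) L u v)]
  apply finsum_congr
  intro m
  obtain ⟨B, hB⟩ := VA.mode_bound (VA.proj m u) v N
  have hB' : ∀ i : ℕ, B ≤ i → VA.mode (VA.proj m u) (N + 1 + i) v = 0 := by
    intro i hi
    have he : N + 1 + (i : ℤ) = N + ((i + 1 : ℕ) : ℤ) := by push_cast; ring
    rw [he]
    exact hB (i + 1) (by omega)
  rw [finsum_nat_eq_range (fun i : ℕ => cchoose (L + 1 + m) i • VA.mode (VA.proj m u) (N + i) v)
        (B + 1) (fun i hi => by beta_reduce; rw [hB i (by omega), smul_zero]),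
      finsum_nat_eq_range (fun i : ℕ => cchoose (L + m) i • VA.mode (VA.proj m u) (N + i) v)
        (B + 1) (fun i hi => by beta_reduce; rw [hB i (by omega), smul_zero]),
      finsum_nat_eq_range (fun i : ℕ => cchoose (L + m) i • VA.mode (VA.proj m u) (N + 1 + i) v)
        (B + 1) (fun i hi => by beta_reduce; rw [hB' i (by omega), smul_zero])]
  rw [Finset.sum_range_succ'
        (fun i : ℕ => cchoose (L + 1 + m) i • VA.mode (VA.proj m u) (N + i) v) B,
      Finset.sum_range_succ'
        (fun i : ℕ => cchoose (L + m) i • VA.mode (VA.proj m u) (N + i) v) B,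
      Finset.sum_range_succ
        (fun i : ℕ => cchoose (L + m) i • VA.mode (VA.proj m u) (N + 1 + i) v) B]
  rw [hB' B le_rfl, smul_zero, add_zero]
  have e1 : ∀ i : ℕ, cchoose (L + 1 + m) (i + 1) • VA.mode (VA.proj m u) (N + (i + 1 : ℕ)) v
      = cchoose (L + m) (i + 1) • VA.mode (VA.proj m u) (N + (i + 1 : ℕ)) v
        + cchoose (L + m) i • VA.mode (VA.proj m u) (N + 1 + i) v := by
    intro i
    have hL : L + 1 + m = (L + m) + 1 := by ring
    rw [hL, cchoose_succ_succ, add_smul]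
    congr 2
    push_cast
    ring
  have e0 : cchoose (L + 1 + m) 0 = cchoose (L + m) 0 := by
    rw [cchoose_zero', cchoose_zero']
  calc (∑ i ∈ Finset.range B,
          cchoose (L + 1 + m) (i + 1) • VA.mode (VA.proj m u) (N + (i + 1 : ℕ)) v)
        + cchoose (L + 1 + m) 0 • VA.mode (VA.proj m u) (N + (0 : ℕ)) v
      = (∑ i ∈ Finset.range B,
          (cchoose (L + m) (i + 1) • VA.mode (VA.proj m u) (N + (i + 1 : ℕ)) v
            + cchoose (L + m) i • VA.mode (VA.proj m u) (N + 1 + i) v))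
        + cchoose (L + m) 0 • VA.mode (VA.proj m u) (N + (0 : ℕ)) v := by
        rw [e0]
        congr 1
        exact Finset.sum_congr rfl fun i _ => e1 i
    _ = ((∑ i ∈ Finset.range B,
          cchoose (L + m) (i + 1) • VA.mode (VA.proj m u) (N + (i + 1 : ℕ)) v)
        + cchoose (L + m) 0 • VA.mode (VA.proj m u) (N + (0 : ℕ)) v)
        + ∑ i ∈ Finset.range B, cchoose (L + m) i • VA.mode (VA.proj m u) (N + 1 + i) v := by
        rw [Finset.sum_add_distrib]
        abel

end GRVertexAlgebra
namespace LBGModule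

variable {V : Type} [AddCommGroup V] [Module ℂ V] {VA : GRVertexAlgebra V}
variable {W : Type} [AddCommGroup W] [Module ℂ W]

lemma zero_mem_omega (M : LBGModule VA W) (n : ℤ) : (0 : W) ∈ M.OmegaSet n :=
  fun _ _ _ _ => M.wmode_zero_right _ _

lemma omega_kill (M : LBGModule VA W) {w : W} {n : ℤ} (hw : w ∈ M.OmegaSet n) {v : V} {q : ℤ}
    (hv : VA.proj q v = v) {t : ℤ} (ht : q - t - 1 < -n) : M.wmode v t w = 0 := by
  rw [← hv]
  exact hw q t v ht

lemma wAct_support_fin (M : LBGModule VA W) (v : V) (k l : ℕ) (w : W) :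
    (Function.support fun m : ℤ =>
      M.wmode (VA.proj m v) ((l : ℤ) - (k : ℤ) - 1 + m) w).Finite :=
  (VA.proj_support_finite v).subset (fun m hm => by
    simp only [Function.mem_support] at hm ⊢
    intro h0
    exact hm (by rw [h0, M.wmode_zero_left]))

lemma wAct_zero (M : LBGModule VA W) (k l : ℕ) (w : W) : M.wAct (0 : V) k l w = 0 := by
  unfold LBGModule.wAct
  apply finsum_eq_zero_of_forall_eq_zero
  intro m
  rw [map_zero, M.wmode_zero_left]

lemma wAct_add (M : LBGModule VA W) (v v' : V) (k l : ℕ) (w : W) :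
    M.wAct (v + v') k l w = M.wAct v k l w + M.wAct v' k l w := by
  unfold LBGModule.wAct
  rw [← finsum_add_distrib (M.wAct_support_fin v k l w) (M.wAct_support_fin v' k l w)]
  apply finsum_congr
  intro m
  rw [map_add, M.wmode_add_left]

lemma wAct_smul (M : LBGModule VA W) (c : ℂ) (v : V) (k l : ℕ) (w : W) :
    M.wAct (c • v) k l w = c • M.wAct v k l w := by
  unfold LBGModule.wAct
  rw [smul_finsum' c (M.wAct_support_fin v k l w)]
  apply finsum_congr
  intro m
  rw [map_smul, M.wmode_smul_left]

lemma wAct_sum {ι : Type*} (M : LBGModule VA W) (s : Finset ι) (f : ι → V) (k l : ℕ) (w : W) :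
    M.wAct (∑ i ∈ s, f i) k l w = ∑ i ∈ s, M.wAct (f i) k l w := by
  classical
  induction s using Finset.induction_on with
  | empty => simp [M.wAct_zero]
  | insert _ _ hx ih =>
      rw [Finset.sum_insert hx, Finset.sum_insert hx, M.wAct_add, ih]

lemma wAct_single (M : LBGModule VA W) {x : V} {d : ℤ} (hx : VA.proj d x = x) (k l : ℕ) (w : W) :
    M.wAct x k l w = M.wmode x ((l : ℤ) - (k : ℤ) - 1 + d) w := by
  unfold LBGModule.wAct
  rw [finsum_eq_single _ d]
  · rw [hx]
  · intro m hm
    rw [← hx, VA.proj_proj_ne hm, M.wmode_zero_left]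

/-- The key computation: the `ϑ`-action of a generator
`Res_x x^{-k-l-p-2} (1+x)^l Y((1+x)^{L(0)} u, x) v` with `u`, `v` homogeneous annihilates
`Ω_l(W)`, by the Jacobi identity. -/
lemma wAct_circ_homog (M : LBGModule VA W) {u v : V} {h q : ℤ}
    (hu : VA.proj h u = u) (hv : VA.proj q v = v) (k l p : ℕ) {w : W}
    (hw : w ∈ M.OmegaSet (l : ℤ)) :
    M.wAct (VA.circExpr u v k l p) k l w = 0 := by
  classical
  set N : ℤ := -(k : ℤ) - l - p - 2 with hN
  obtain ⟨B, hB⟩ := VA.mode_bound u v N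
  set g : ℕ → V := fun i => cchoose ((l : ℤ) + h) i • VA.mode u (N + i) v with hg
  have hgw : ∀ i : ℕ, VA.proj (h + q - (N + i) - 1) (g i) = g i := by
    intro i
    simp only [hg]
    rw [map_smul, VA.mode_homog hu hv (N + i)]
  set c : ℤ := h + q - N - 1 with hc
  have hwt : ∀ (i : ℕ) (m : ℤ), m ≠ c - i → VA.proj m (g i) = 0 := by
    intro i m hm
    have h1 : VA.proj m (g i) = VA.proj m (VA.proj (h + q - (N + i) - 1) (g i)) := by
      rw [hgw i]
    rw [h1, VA.proj_proj_ne (by omega) _]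
  have hx : VA.circExpr u v k l p = ∑ i ∈ Finset.range B, g i := by
    have h1 : VA.circExpr u v k l p = VA.resPow N (l : ℤ) u v := rfl
    rw [h1, VA.resPow_homog_left hu]
    refine finsum_nat_eq_range _ B (fun i hi => ?_)
    beta_reduce
    rw [hB i hi, smul_zero]
  unfold LBGModule.wAct
  set s : Finset ℤ := (Finset.range B).image (fun i : ℕ => c - (i : ℤ)) with hs
  have hsup : (Function.support fun m : ℤ =>
      M.wmode (VA.proj m (VA.circExpr u v k l p)) ((l : ℤ) - (k : ℤ) - 1 + m) w) ⊆ ↑s := by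
    intro m hm
    simp only [Function.mem_support] at hm
    rw [Finset.mem_coe, hs, Finset.mem_image]
    by_contra hns
    push_neg at hns
    apply hm
    have hz : VA.proj m (VA.circExpr u v k l p) = 0 := by
      rw [hx, map_sum]
      exact Finset.sum_eq_zero fun i hi => hwt i m fun heq => hns i hi heq.symm
    rw [hz, M.wmode_zero_left]
  rw [finsum_eq_sum_of_support_subset _ hsup, hs,
    Finset.sum_image (by intro a _ b _ hab; dsimp only at hab; omega)]
  have hproj : ∀ i ∈ Finset.range B, VA.proj (c - (i : ℤ)) (VA.circExpr u v k l p) = g i := by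
    intro i hi
    rw [hx, map_sum, Finset.sum_eq_single_of_mem i hi]
    · have he : c - (i : ℤ) = h + q - (N + i) - 1 := by omega
      rw [he, hgw i]
    · intro j _ hji
      exact hwt j (c - i) fun heq => hji (by omega)
  have hstep : ∀ i ∈ Finset.range B,
      M.wmode (VA.proj (c - (i : ℤ)) (VA.circExpr u v k l p)) ((l : ℤ) - (k : ℤ) - 1 + (c - i)) w
        = cchoose ((l : ℤ) + h) i •
            M.wmode (VA.mode u (N + i) v) ((l : ℤ) + h + ((q : ℤ) + l + p) - i) w := by
    intro i hi
    rw [hproj i hi]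
    simp only [hg]
    rw [M.wmode_smul_left]
    have he : (l : ℤ) - (k : ℤ) - 1 + (c - i) = (l : ℤ) + h + ((q : ℤ) + l + p) - i := by omega
    rw [he]
  rw [Finset.sum_congr rfl hstep,
    ← finsum_nat_eq_range
      (fun i : ℕ => cchoose ((l : ℤ) + h) i •
        M.wmode (VA.mode u (N + i) v) ((l : ℤ) + h + ((q : ℤ) + l + p) - i) w)
      B (fun i hi => by beta_reduce; rw [hB i hi, M.wmode_zero_left, smul_zero])]
  rw [M.jacobi u v w N ((l : ℤ) + h) ((q : ℤ) + l + p)]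
  have hz1 : (∑ᶠ i : ℕ, ((-1 : ℂ) ^ (i : ℕ) * cchoose N i) •
      M.wmode u ((l : ℤ) + h + N - i) (M.wmode v ((q : ℤ) + l + p + i) w)) = 0 := by
    apply finsum_eq_zero_of_forall_eq_zero
    intro i
    rw [M.omega_kill hw hv (by omega), M.wmode_zero_right, smul_zero]
  have hz2 : (∑ᶠ i : ℕ, ((-1 : ℂ) ^ (N + i : ℤ) * cchoose N i) •
      M.wmode v ((q : ℤ) + l + p + N - i) (M.wmode u ((l : ℤ) + h + i) w)) = 0 := by
    apply finsum_eq_zero_of_forall_eq_zero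
    intro i
    rw [M.omega_kill hw hu (by omega), M.wmode_zero_right, smul_zero]
  rw [hz1, hz2, sub_zero]

lemma wAct_circ (M : LBGModule VA W) (u v : V) (k l p : ℕ) {w : W}
    (hw : w ∈ M.OmegaSet (l : ℤ)) :
    M.wAct (VA.circExpr u v k l p) k l w = 0 := by
  classical
  have hu : u = ∑ m ∈ (VA.proj_support_finite u).toFinset, VA.proj m u := by
    conv_lhs => rw [← VA.proj_sum u]
    exact finsum_eq_sum _ _
  have hv : v = ∑ m ∈ (VA.proj_support_finite v).toFinset, VA.proj m v := by
    conv_lhs => rw [← VA.proj_sum v]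
    exact finsum_eq_sum _ _
  have hdec : VA.circExpr u v k l p
      = ∑ m ∈ (VA.proj_support_finite u).toFinset,
          ∑ m' ∈ (VA.proj_support_finite v).toFinset,
            VA.circExpr (VA.proj m u) (VA.proj m' v) k l p := by
    show VA.resPow (-(k : ℤ) - l - p - 2) (l : ℤ) u v = _
    conv_lhs => rw [hu, hv]
    rw [VA.resPow_sum_left]
    exact Finset.sum_congr rfl fun m _ => VA.resPow_sum_right _ _ _ _ _
  rw [hdec, M.wAct_sum]
  apply Finset.sum_eq_zero
  intro m _
  rw [M.wAct_sum]
  apply Finset.sum_eq_zero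
  intro m' _
  exact M.wAct_circ_homog (h := m) (q := m') (by rw [VA.proj_idem]; simp)
    (by rw [VA.proj_idem]; simp) k l p hw

lemma wAct_LL_homog (M : LBGModule VA W) {v : V} {q : ℤ} (hv : VA.proj q v = v)
    (k l : ℕ) (w : W) : M.wAct (VA.LLExpr k l v) k l w = 0 := by
  have h1 : VA.proj (q + 1) (VA.Lneg1op v) = VA.Lneg1op v := by
    have h2 := VA.mode_homog hv VA.one_homogeneous (-2)
    have he : q + 0 - (-2) - 1 = q + 1 := by ring
    rw [he] at h2
    exact h2
  have hsplit : VA.LLExpr k l v = VA.Lneg1op v + ((q : ℂ) + l - k) • v := by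
    unfold GRVertexAlgebra.LLExpr GRVertexAlgebra.L0op
    rw [VA.L0_eq v hv, add_assoc, ← add_smul,
      show (q : ℂ) + ((l : ℂ) - (k : ℂ)) = (q : ℂ) + l - k from by ring]
  rw [hsplit, M.wAct_add, M.wAct_smul, M.wAct_single h1 k l w, M.wAct_single hv k l w]
  show M.wmode (VA.mode v (-2) VA.one) ((l : ℤ) - (k : ℤ) - 1 + (q + 1)) w + _ = 0
  rw [M.LW1_deriv]
  rw [show (l : ℤ) - (k : ℤ) - 1 + (q + 1) - 1 = (l : ℤ) - (k : ℤ) - 1 + q from by ring]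
  rw [← add_smul]
  rw [show -(((l : ℤ) - (k : ℤ) - 1 + (q + 1) : ℤ) : ℂ) + ((q : ℂ) + l - k) = 0 from by
    push_cast; ring]
  rw [zero_smul]

lemma L0op_add (VA : GRVertexAlgebra V) (v v' : V) :
    VA.L0op (v + v') = VA.L0op v + VA.L0op v' := by
  unfold GRVertexAlgebra.L0op
  rw [← finsum_add_distrib (VA.support_wsmul_fin v) (VA.support_wsmul_fin v')]
  apply finsum_congr
  intro m
  rw [map_add, smul_add]

lemma LLExpr_zero (VA : GRVertexAlgebra V) (k l : ℕ) : VA.LLExpr k l (0 : V) = 0 := by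
  unfold GRVertexAlgebra.LLExpr GRVertexAlgebra.Lneg1op GRVertexAlgebra.L0op
  rw [VA.mode_zero_left]
  simp

lemma LLExpr_add (VA : GRVertexAlgebra V) (k l : ℕ) (v v' : V) :
    VA.LLExpr k l (v + v') = VA.LLExpr k l v + VA.LLExpr k l v' := by
  unfold GRVertexAlgebra.LLExpr GRVertexAlgebra.Lneg1op
  rw [VA.mode_add_left, L0op_add, smul_add]
  abel

lemma LLExpr_sum {ι : Type*} (VA : GRVertexAlgebra V) (k l : ℕ) (s : Finset ι) (f : ι → V) :
    VA.LLExpr k l (∑ i ∈ s, f i) = ∑ i ∈ s, VA.LLExpr k l (f i) := by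
  classical
  induction s using Finset.induction_on with
  | empty => simp [LLExpr_zero]
  | insert _ _ hx ih =>
      rw [Finset.sum_insert hx, Finset.sum_insert hx, LLExpr_add, ih]

lemma wAct_LL (M : LBGModule VA W) (v : V) (k l : ℕ) (w : W) :
    M.wAct (VA.LLExpr k l v) k l w = 0 := by
  classical
  have hv : v = ∑ m ∈ (VA.proj_support_finite v).toFinset, VA.proj m v := by
    conv_lhs => rw [← VA.proj_sum v]
    exact finsum_eq_sum _ _
  conv_lhs => rw [hv]
  rw [LLExpr_sum, M.wAct_sum]
  apply Finset.sum_eq_zero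
  intro m _
  exact M.wAct_LL_homog (q := m) (by rw [VA.proj_idem]; simp) k l w

end LBGModule

namespace GRVertexAlgebra

variable {V : Type} [AddCommGroup V] [Module ℂ V] (VA : GRVertexAlgebra V)

lemma memO_memQ (A : UInf V) (hA : VA.memO A) : VA.memQ A := by
  intro W _ _ M n k w hw
  have hz : M.wAct (A.1 k n) k n w = 0 := by
    refine Submodule.span_induction ?_ ?_ ?_ ?_ (hA k n)
    · rintro x hx
      rcases hx with hx | hx
      · obtain ⟨u, v', p, rfl⟩ := hx
        exact M.wAct_circ u v' k n p hw
      · obtain ⟨v', rfl⟩ := hx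
        exact M.wAct_LL v' k n w
    · exact M.wAct_zero k n w
    · intro x y _ _ hx hy
      rw [M.wAct_add, hx, hy, add_zero]
    · intro a x _ hx
      rw [M.wAct_smul, hx, smul_zero]
  rw [hz]
  exact M.zero_mem_omega _

lemma circExpr_shift (u v : V) (k l p : ℕ) (hk : 1 ≤ k) (hl : 1 ≤ l) :
    VA.circExpr u v k l p
      = VA.circExpr u v (k - 1) (l - 1) (p + 2) + VA.circExpr u v (k - 1) (l - 1) (p + 1) := by
  unfold GRVertexAlgebra.circExpr
  have e1 : ((l - 1 : ℕ) : ℤ) = (l : ℤ) - 1 := by omega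
  have e2 : ((k - 1 : ℕ) : ℤ) = (k : ℤ) - 1 := by omega
  have e3 : ((p + 2 : ℕ) : ℤ) = (p : ℤ) + 2 := by push_cast; ring
  have e4 : ((p + 1 : ℕ) : ℤ) = (p : ℤ) + 1 := by push_cast; ring
  rw [e1, e2, e3, e4]
  have e5 : -((k : ℤ) - 1) - ((l : ℤ) - 1) - ((p : ℤ) + 2) - 2 = -(k : ℤ) - l - p - 2 := by ring
  have e6 : -((k : ℤ) - 1) - ((l : ℤ) - 1) - ((p : ℤ) + 1) - 2 = -(k : ℤ) - l - p - 2 + 1 := by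
    ring
  rw [e5, e6]
  have key := VA.resPow_succ (-(k : ℤ) - l - p - 2) ((l : ℤ) - 1) u v
  rw [show (l : ℤ) - 1 + 1 = (l : ℤ) from by ring] at key
  exact key

lemma LLExpr_shift (k l : ℕ) (hk : 1 ≤ k) (hl : 1 ≤ l) (v : V) :
    VA.LLExpr k l v = VA.LLExpr (k - 1) (l - 1) v := by
  unfold GRVertexAlgebra.LLExpr
  rw [show (((l - 1 : ℕ) : ℂ) - ((k - 1 : ℕ) : ℂ)) = (l : ℂ) - (k : ℂ) from by
    rw [Nat.cast_sub hl, Nat.cast_sub hk, Nat.cast_one]; ring]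

end GRVertexAlgebra
open GRVertexAlgebra in
/-- If `V` is a grading-restricted vertex algebra and `[v]_{kl} ∈ O^∞(V)` with
`k, l ≥ 1`, then `[v]_{k-1,l-1} ∈ O^∞(V)`.  In particular, since `O^∞(V) ⊆ Q^∞(V)`,
elements of `O^∞(V)` satisfy the diagonal shift property:
`[v]_{kl} ∈ Q^∞(V)` and `[v]_{k-1,l-1} ∈ Q^∞(V)`. -/
theorem Oinf_diagonal_shift {V : Type} [AddCommGroup V] [Module ℂ V]
    (VA : GRVertexAlgebra V) (v : V) (k l : ℕ) (hk : 1 ≤ k) (hl : 1 ≤ l)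
    (h : VA.memO (Usingle v k l)) :
    VA.memO (Usingle v (k - 1) (l - 1)) ∧
    VA.memQ (Usingle v k l) ∧ VA.memQ (Usingle v (k - 1) (l - 1)) := by
  have hv : v ∈ Submodule.span ℂ
      ({x : V | ∃ (u v' : V) (p : ℕ), x = VA.circExpr u v' k l p}
        ∪ {x : V | ∃ v' : V, x = VA.LLExpr k l v'}) := by
    have h0 := h k l
    have he : (Usingle v k l).1 k l = v := by
      show (if k = k ∧ l = l then v else 0) = v
      simp
    rwa [he] at h0
  have hshift : v ∈ Submodule.span ℂ
      ({x : V | ∃ (u v' : V) (p : ℕ), x = VA.circExpr u v' (k - 1) (l - 1) p}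
        ∪ {x : V | ∃ v' : V, x = VA.LLExpr (k - 1) (l - 1) v'}) := by
    refine Submodule.span_le.mpr ?_ hv
    rintro x (hx | hx)
    · obtain ⟨u, v', p, rfl⟩ := hx
      rw [VA.circExpr_shift u v' k l p hk hl]
      exact Submodule.add_mem _
        (Submodule.subset_span (Or.inl ⟨u, v', p + 2, rfl⟩))
        (Submodule.subset_span (Or.inl ⟨u, v', p + 1, rfl⟩))
    · obtain ⟨v', rfl⟩ := hx
      rw [VA.LLExpr_shift k l hk hl v']
      exact Submodule.subset_span (Or.inr ⟨v', rfl⟩)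
  have hO' : VA.memO (Usingle v (k - 1) (l - 1)) := by
    intro k' l'
    by_cases hc : k' = k - 1 ∧ l' = l - 1
    · obtain ⟨rfl, rfl⟩ := hc
      have he : (Usingle v (k - 1) (l - 1)).1 (k - 1) (l - 1) = v := by
        show (if (k - 1 : ℕ) = k - 1 ∧ (l - 1 : ℕ) = l - 1 then v else 0) = v
        simp
      rw [he]
      exact hshift
    · have he : (Usingle v (k - 1) (l - 1)).1 k' l' = 0 := by
        show (if k' = k - 1 ∧ l' = l - 1 then v else 0) = 0
        rw [if_neg hc]
      rw [he]
      exact Submodule.zero_mem _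
  exact ⟨hO', VA.memO_memQ _ h, VA.memO_memQ _ hO'⟩
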